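/- arXiv:0711.0899 — 2 statements merged into one kernel-verified Lean document; each statement's English description precedes it below -/
import Mathlib

section
/- If P ∈ ℚ[x_1,…,x_n,y_1,…,y_n] is homogeneous of positive degree and invariant under the diagonal action of the symmetric group S_n (each permutation σ acting simultaneously by x_i ↦ x_{σ(i)} and y_i ↦ y_{σ(i)}), then P(∂)Δ_μ = 0. -/
/-!
The operators `P(∂)` with `P(∂) Δ = 0` form an ideal, so it suffices to treat generators.
Over a field of characteristic zero, every diagonally invariant polynomial without constant term
lies in the ideal generated by the polarized power sums `p_(a,b) = ∑ᵢ xᵢ^a yᵢ^b`, `(a,b) ≠ 0`: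
symmetrize its monomials and induct on the number of indices `i` a monomial involves, since
`p_(a,b) · Sym(m)` is the sum over `i` of `Sym(m xᵢ^a yᵢ^b)`.
Finally `p_(a,b)(∂)` kills `det (xᵢ^(p_j) yᵢ^(q_j))` whenever the biexponents form a lower set of
`ℕ × ℕ`, as those of a hook do: `∂_xᵢ^a ∂_yᵢ^b` turns the entry of column `j` into a multiple of
the entry of the column `j'` with `(p_j', q_j') = (p_j - a, q_j - b)`, so in the Leibniz expansion
the terms of `τ` and `τ * swap j j'` cancel.
-/

open MvPolynomial

noncomputable section

/-- Partial derivatives with respect to two variables commute. -/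
lemma pderiv_pderiv_comm {σ : Type*} (i j : σ) (f : MvPolynomial σ ℚ) :
    pderiv i (pderiv j f) = pderiv j (pderiv i f) := by
  classical
  rcases eq_or_ne i j with rfl | hij
  · rfl
  · induction f using MvPolynomial.induction_on' with
    | monomial s a =>
      simp only [pderiv_monomial, Finsupp.coe_tsub, Pi.sub_apply, Finsupp.single_apply,
        if_neg hij, if_neg (Ne.symm hij), Nat.sub_zero]
      rw [tsub_tsub, tsub_tsub, add_comm, mul_right_comm]
    | add p q hp hq => simp [hp, hq]

lemma pderiv_commute {σ : Type*} (i j : σ) :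
    Commute ((pderiv i).toLinearMap : Module.End ℚ (MvPolynomial σ ℚ))
      (pderiv j).toLinearMap := by
  apply LinearMap.ext
  intro f
  simpa only [Module.End.mul_apply, Derivation.coeFn_coe] using pderiv_pderiv_comm i j f

/-- The monomial differential operator `∂^d = ∏ᵢ (∂/∂zᵢ)^(dᵢ)`. -/
def Dmon {σ : Type*} [DecidableEq σ] (d : σ →₀ ℕ) :
    Module.End ℚ (MvPolynomial σ ℚ) :=
  d.support.noncommProd
    (fun i => ((pderiv i).toLinearMap : Module.End ℚ (MvPolynomial σ ℚ)) ^ d i)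
    fun i _ j _ _ => Commute.pow_pow (pderiv_commute i j) _ _

/-- `P(∂) Q` : the differential operator associated with `P` (substituting `∂/∂zᵢ`
for each variable `zᵢ`) applied to `Q`. -/
def DP {σ : Type*} [DecidableEq σ] (P Q : MvPolynomial σ ℚ) : MvPolynomial σ ℚ :=
  Finsupp.sum (AddMonoidAlgebra.coeff P) fun d c => c • Dmon d Q

/-- `x`-exponents of the biexponents of the hook `(K+1,1^L)`, listed in lexicographic
order: `(0,0),(0,1),…,(0,K),(1,0),(2,0),…,(L,0)`. -/
def hookP (K L : ℕ) (j : Fin (K + L + 1)) : ℕ :=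
  if (j : ℕ) ≤ K then 0 else (j : ℕ) - K

/-- `y`-exponents of the biexponents of the hook `(K+1,1^L)`. -/
def hookQ (K L : ℕ) (j : Fin (K + L + 1)) : ℕ :=
  if (j : ℕ) ≤ K then (j : ℕ) else 0

/-- `Δ_μ = det (xᵢ^(p_j) yᵢ^(q_j))` for the hook `μ = (K+1,1^L)` of `n = K+L+1`;
the variable `Sum.inl i` is `xᵢ` and `Sum.inr i` is `yᵢ`. -/
def Delta (K L : ℕ) : MvPolynomial (Fin (K + L + 1) ⊕ Fin (K + L + 1)) ℚ :=
  Matrix.det fun i j =>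
    X (Sum.inl i) ^ hookP K L j * X (Sum.inr i) ^ hookQ K L j

open Finset

section DifferentialOperators

variable {σ : Type*}

lemma pairwise_commute_pderiv_pow (d : σ → ℕ) (s : Set σ) :
    s.Pairwise (Function.onFun Commute fun i =>
      ((pderiv i).toLinearMap : Module.End ℚ (MvPolynomial σ ℚ)) ^ d i) :=
  fun i _ j _ _ => (pderiv_commute i j).pow_pow _ _

lemma pderiv_pow_monomial (i : σ) (k : ℕ) (e : σ →₀ ℕ) (c : ℚ) :
    ((pderiv i).toLinearMap ^ k) (monomial e c) =
      monomial (e - Finsupp.single i k) (c * (e i).descFactorial k) := by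
  induction k with
  | zero => simp
  | succ k ih =>
    rw [pow_succ', Module.End.mul_apply, ih, Derivation.coeFn_coe, pderiv_monomial,
      tsub_tsub, ← Finsupp.single_add, Finsupp.tsub_apply, Finsupp.single_eq_same,
      Nat.descFactorial_succ, Nat.cast_mul, mul_comm (((e i - k : ℕ)) : ℚ), mul_assoc]

variable [DecidableEq σ]

lemma Dmon_eq_noncommProd_of_support_subset {d : σ →₀ ℕ} {s : Finset σ} (h : d.support ⊆ s) :
    Dmon d = s.noncommProd (fun i => (pderiv i).toLinearMap ^ d i)
      (pairwise_commute_pderiv_pow d _) := by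
  have hone : ∀ i ∈ s \ d.support,
      ((pderiv i).toLinearMap : Module.End ℚ (MvPolynomial σ ℚ)) ^ d i = 1 := fun i hi => by
    rw [Finsupp.notMem_support_iff.mp (mem_sdiff.mp hi).2, pow_zero]
  symm
  calc s.noncommProd _ _
      = (d.support ∪ s \ d.support).noncommProd _ (pairwise_commute_pderiv_pow d _) :=
        noncommProd_congr (union_sdiff_of_subset h).symm (fun _ _ => rfl) _
    _ = d.support.noncommProd _ _ * (s \ d.support).noncommProd _ _ :=
        noncommProd_union_of_disjoint disjoint_sdiff _ _
    _ = Dmon d := by rw [noncommProd_eq_pow_card _ _ _ 1 hone, one_pow, mul_one]; rfl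

lemma Dmon_add (a b : σ →₀ ℕ) : Dmon (a + b) = Dmon a * Dmon b := by
  have ha : a.support ⊆ a.support ∪ b.support := subset_union_left
  have hb : b.support ⊆ a.support ∪ b.support := subset_union_right
  rw [Dmon_eq_noncommProd_of_support_subset Finsupp.support_add,
    Dmon_eq_noncommProd_of_support_subset ha, Dmon_eq_noncommProd_of_support_subset hb]
  refine (noncommProd_congr rfl (fun i _ => pow_add _ _ _) _).trans ?_
  exact noncommProd_mul_distrib _ _ _ _ fun i _ j _ _ => (pderiv_commute i j).pow_pow _ _

lemma Dmon_single (i : σ) (k : ℕ) :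
    Dmon (Finsupp.single i k) = (pderiv i).toLinearMap ^ k := by
  rw [Dmon_eq_noncommProd_of_support_subset Finsupp.support_single_subset,
    noncommProd_singleton, Finsupp.single_eq_same]

lemma DP_monomial (d : σ →₀ ℕ) (c : ℚ) (Q : MvPolynomial σ ℚ) :
    DP (monomial d c) Q = c • Dmon d Q :=
  Finsupp.sum_single_index (zero_smul ℚ _)

lemma DP_zero_left (Q : MvPolynomial σ ℚ) : DP 0 Q = 0 :=
  Finsupp.sum_zero_index

lemma DP_zero_right (P : MvPolynomial σ ℚ) : DP P 0 = 0 :=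
  sum_eq_zero fun d _ => by simp only [map_zero, smul_zero]

lemma DP_add_left (P P' Q : MvPolynomial σ ℚ) : DP (P + P') Q = DP P Q + DP P' Q :=
  Finsupp.sum_add_index' (fun _ => zero_smul ℚ _) fun _ _ _ => add_smul _ _ _

lemma DP_sum_left {α : Type*} (s : Finset α) (F : α → MvPolynomial σ ℚ) (Q : MvPolynomial σ ℚ) :
    DP (∑ a ∈ s, F a) Q = ∑ a ∈ s, DP (F a) Q :=
  map_sum (AddMonoidHom.mk' (DP · Q) (DP_add_left · · Q)) F s

lemma DP_mul (P Q R : MvPolynomial σ ℚ) : DP (P * Q) R = DP P (DP Q R) := by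
  induction P using MvPolynomial.induction_on' with
  | add p q hp hq => rw [add_mul, DP_add_left, hp, hq, DP_add_left]
  | monomial u a =>
    induction Q using MvPolynomial.induction_on' with
    | add p q hp hq => rw [mul_add, DP_add_left, hp, hq, DP_add_left, DP_monomial, DP_monomial,
        DP_monomial, map_add, smul_add]
    | monomial v b => rw [monomial_mul, DP_monomial, DP_monomial, DP_monomial, Dmon_add,
        Module.End.mul_apply, map_smul, smul_smul]

def diffAnnihilator (Q : MvPolynomial σ ℚ) : Ideal (MvPolynomial σ ℚ) where
  carrier := {P | DP P Q = 0}
  add_mem' {P P'} (hP : DP P Q = 0) (hP' : DP P' Q = 0) :=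
    show DP (P + P') Q = 0 by rw [DP_add_left, hP, hP', add_zero]
  zero_mem' := DP_zero_left Q
  smul_mem' R P (hP : DP P Q = 0) := show DP (R * P) Q = 0 by rw [DP_mul, hP, DP_zero_right]

lemma mem_diffAnnihilator {P Q : MvPolynomial σ ℚ} : P ∈ diffAnnihilator Q ↔ DP P Q = 0 :=
  Iff.rfl

end DifferentialOperators

section DiagonalInvariants

variable {ι R : Type*} [CommSemiring R]

def biexp (i : ι) (v : ℕ × ℕ) : ι ⊕ ι →₀ ℕ :=
  Finsupp.single (Sum.inl i) v.1 + Finsupp.single (Sum.inr i) v.2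

def slotExp (e : ι ⊕ ι →₀ ℕ) (i : ι) : ℕ × ℕ := (e (Sum.inl i), e (Sum.inr i))

lemma slotExp_injective : Function.Injective (slotExp (ι := ι)) := by
  intro e f h
  ext (i | i)
  · exact congrArg Prod.fst (congrFun h i)
  · exact congrArg Prod.snd (congrFun h i)

@[simp] lemma slotExp_add (e f : ι ⊕ ι →₀ ℕ) : slotExp (e + f) = slotExp e + slotExp f := rfl

@[simp] lemma slotExp_tsub (e f : ι ⊕ ι →₀ ℕ) : slotExp (e - f) = slotExp e - slotExp f := rfl

lemma slotExp_mapDomain (τ : Equiv.Perm ι) (e : ι ⊕ ι →₀ ℕ) :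
    slotExp (Finsupp.mapDomain (Sum.map τ τ) e) = slotExp e ∘ τ.symm := by
  have hinj : Function.Injective (Sum.map τ τ) := Sum.map_injective.mpr ⟨τ.injective, τ.injective⟩
  funext k
  obtain ⟨t, rfl⟩ := τ.surjective k
  simp only [slotExp, Function.comp_apply, Equiv.symm_apply_apply]
  exact Prod.ext (Finsupp.mapDomain_apply hinj e (Sum.inl t))
    (Finsupp.mapDomain_apply hinj e (Sum.inr t))

lemma X_pow_mul_X_pow_eq_monomial_biexp (i : ι) (v : ℕ × ℕ) :
    (X (Sum.inl i) ^ v.1 * X (Sum.inr i) ^ v.2 : MvPolynomial (ι ⊕ ι) R) =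
      monomial (biexp i v) 1 := by
  rw [X_pow_eq_monomial, X_pow_eq_monomial, monomial_mul, one_mul, biexp]

lemma rename_monomial_biexp (τ : Equiv.Perm ι) (i : ι) (v : ℕ × ℕ) (c : R) :
    rename (Sum.map τ τ) (monomial (biexp i v) c) = monomial (biexp (τ i) v) c := by
  rw [rename_monomial, biexp, biexp, Finsupp.mapDomain_add, Finsupp.mapDomain_single,
    Finsupp.mapDomain_single, Sum.map_inl, Sum.map_inr]

@[simp] lemma slotExp_biexp [DecidableEq ι] (i : ι) (v : ℕ × ℕ) :
    slotExp (biexp i v) = Pi.single i v := by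
  ext k
  all_goals
    rcases eq_or_ne k i with rfl | h
    · simp [slotExp, biexp]
    · simp [slotExp, biexp, h]

lemma rename_swap_monomial_add_biexp [DecidableEq ι] {f : ι ⊕ ι →₀ ℕ} {i k : ι}
    (hi : slotExp f i = 0) (hk : slotExp f k = 0) (v : ℕ × ℕ) (c : R) :
    rename (Sum.map (Equiv.swap i k) (Equiv.swap i k)) (monomial (f + biexp i v) c) =
      monomial (f + biexp k v) c := by
  rw [rename_monomial]
  refine congrArg (monomial · c) (slotExp_injective ?_)
  funext t
  rw [slotExp_mapDomain, Function.comp_apply, Equiv.symm_swap]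
  simp only [slotExp_add, slotExp_biexp, Pi.add_apply, Equiv.swap_apply_def, Pi.single_apply]
  split_ifs <;> simp_all

variable [Fintype ι]

def slots (e : ι ⊕ ι →₀ ℕ) : Finset ι := univ.filter (slotExp e · ≠ 0)

lemma mem_slots {e : ι ⊕ ι →₀ ℕ} {i : ι} : i ∈ slots e ↔ slotExp e i ≠ 0 := by
  simp [slots]

lemma slots_nonempty {e : ι ⊕ ι →₀ ℕ} : (slots e).Nonempty ↔ e ≠ 0 := by
  rw [← not_iff_not, not_nonempty_iff_eq_empty, not_not, ← slotExp_injective.eq_iff, funext_iff]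
  simp [slots, filter_eq_empty_iff, slotExp]

def polarizedPowerSum (v : ℕ × ℕ) : MvPolynomial (ι ⊕ ι) R :=
  ∑ i, monomial (biexp i v) 1

lemma rename_polarizedPowerSum (τ : Equiv.Perm ι) (v : ℕ × ℕ) :
    rename (Sum.map τ τ) (polarizedPowerSum v : MvPolynomial (ι ⊕ ι) R) = polarizedPowerSum v := by
  simp only [polarizedPowerSum, map_sum, rename_monomial_biexp]
  exact Equiv.sum_comp τ fun i => monomial (biexp i v) 1

lemma polarizedPowerSum_mul_monomial (v : ℕ × ℕ) (f : ι ⊕ ι →₀ ℕ) :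
    polarizedPowerSum v * monomial f (1 : R) = ∑ i, monomial (f + biexp i v) 1 := by
  rw [polarizedPowerSum, sum_mul]
  exact sum_congr rfl fun i _ => by rw [monomial_mul, mul_one, add_comm]

variable [DecidableEq ι]

lemma slots_add_biexp_subset {f : ι ⊕ ι →₀ ℕ} {i : ι} (hi : i ∈ slots f) (v : ℕ × ℕ) :
    slots (f + biexp i v) ⊆ slots f := by
  intro k hk
  rcases eq_or_ne k i with rfl | hki
  · exact hi
  · simpa [mem_slots, hki] using hk

def symmetrize : MvPolynomial (ι ⊕ ι) R →ₗ[R] MvPolynomial (ι ⊕ ι) R :=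
  ∑ τ : Equiv.Perm ι, (rename (Sum.map τ τ)).toLinearMap

lemma symmetrize_apply (P : MvPolynomial (ι ⊕ ι) R) :
    symmetrize P = ∑ τ : Equiv.Perm ι, rename (Sum.map τ τ) P :=
  LinearMap.sum_apply _ _ _

lemma symmetrize_of_invariant {P : MvPolynomial (ι ⊕ ι) R}
    (hP : ∀ τ : Equiv.Perm ι, rename (Sum.map τ τ) P = P) :
    symmetrize P = Fintype.card (Equiv.Perm ι) • P := by
  rw [symmetrize_apply, sum_congr rfl fun τ _ => hP τ, sum_const, card_univ]

lemma symmetrize_rename (τ : Equiv.Perm ι) (P : MvPolynomial (ι ⊕ ι) R) :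
    symmetrize (rename (Sum.map τ τ) P) = symmetrize P := by
  simp only [symmetrize_apply, rename_rename, Sum.map_comp_map]
  exact Fintype.sum_equiv (Equiv.mulRight τ) _ _ fun _ => rfl

lemma symmetrize_mul_of_invariant {Q : MvPolynomial (ι ⊕ ι) R}
    (hQ : ∀ τ : Equiv.Perm ι, rename (Sum.map τ τ) Q = Q) (P : MvPolynomial (ι ⊕ ι) R) :
    symmetrize (Q * P) = Q * symmetrize P := by
  simp only [symmetrize_apply, map_mul, hQ, mul_sum]

lemma polarizedPowerSum_mul_symmetrize_monomial (v : ℕ × ℕ) {f : ι ⊕ ι →₀ ℕ} {a : ι}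
    (ha : slotExp f a = 0) :
    polarizedPowerSum v * symmetrize (monomial f (1 : R)) =
      ∑ i ∈ slots f, symmetrize (monomial (f + biexp i v) 1) +
        (slots f)ᶜ.card • symmetrize (monomial (f + biexp a v) 1) := by
  rw [← symmetrize_mul_of_invariant (rename_polarizedPowerSum · v),
    polarizedPowerSum_mul_monomial, map_sum, ← sum_add_sum_compl (slots f), ← sum_const]
  refine congrArg _ (sum_congr rfl fun i hi => ?_)
  have hi : slotExp f i = 0 := by simpa [mem_slots] using hi
  rw [← rename_swap_monomial_add_biexp ha hi v, symmetrize_rename]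

end DiagonalInvariants

lemma Ideal.nsmul_mem_iff_of_charZero {R A : Type*} [Field R] [CharZero R] [CommRing A]
    [Algebra R A] (I : Ideal A) {n : ℕ} (hn : n ≠ 0) {x : A} : n • x ∈ I ↔ x ∈ I := by
  have hunit : IsUnit (n : A) := by
    simpa only [map_natCast] using (IsUnit.mk0 (n : R) (Nat.cast_ne_zero.2 hn)).map (algebraMap R A)
  rw [nsmul_eq_mul, I.unit_mul_mem_iff_mem hunit]

section PolarizedPowerSumIdeal

variable {ι R : Type*} [Fintype ι] [DecidableEq ι] [Field R] [CharZero R]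

def polarizedPowerSumIdeal : Ideal (MvPolynomial (ι ⊕ ι) R) :=
  Ideal.span (polarizedPowerSum '' {v | v ≠ 0})

theorem symmetrize_monomial_mem_polarizedPowerSumIdeal {e : ι ⊕ ι →₀ ℕ} (he : e ≠ 0) :
    symmetrize (monomial e (1 : R)) ∈ polarizedPowerSumIdeal := by
  induction hn : (slots e).card using Nat.strong_induction_on generalizing e with
  | _ n ih =>
  subst hn
  obtain ⟨a, ha⟩ := slots_nonempty.2 he
  -- Clear the slot `a` of `e`; multiplying back by `p_v` gives `Sym(x^e)` with a nonzero
  -- multiplicity, plus terms with fewer slots.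
  set v := slotExp e a
  set f := e - biexp a v
  have hfa : slotExp f a = 0 := by simp [f, v]
  have hef : f + biexp a v = e := by
    refine slotExp_injective (funext fun k => ?_)
    rcases eq_or_ne k a with rfl | hka
    · simp [f, v]
    · simp [f, hka]
  have hslots : slots f = (slots e).erase a := by
    ext k
    rcases eq_or_ne k a with rfl | hka
    · simp [mem_slots, hfa]
    · simp [mem_slots, f, hka]
  have hterms : ∑ i ∈ slots f, symmetrize (monomial (f + biexp i v) (1 : R)) ∈
      polarizedPowerSumIdeal := by
    refine sum_mem fun i hi => ih _ ?_ (fun h0 => slots_nonempty.1 ⟨i, hi⟩ (add_eq_zero.1 h0).1) rfl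
    calc (slots (f + biexp i v)).card ≤ (slots f).card := card_le_card (slots_add_biexp_subset hi v)
      _ < (slots e).card := hslots ▸ card_erase_lt_of_mem ha
  have hprod : polarizedPowerSum v * symmetrize (monomial f (1 : R)) ∈ polarizedPowerSumIdeal :=
    Ideal.mul_mem_right _ _ (Ideal.subset_span ⟨v, mem_slots.1 ha, rfl⟩)
  rw [polarizedPowerSum_mul_symmetrize_monomial v hfa, hef, Ideal.add_mem_iff_right _ hterms,
    Ideal.nsmul_mem_iff_of_charZero (R := R) _
      (card_ne_zero_of_mem (a := a) (mem_compl.2 (by simp [mem_slots, hfa])))]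
    at hprod
  exact hprod

theorem mem_polarizedPowerSumIdeal {P : MvPolynomial (ι ⊕ ι) R}
    (hP : ∀ τ : Equiv.Perm ι, rename (Sum.map τ τ) P = P) (h0 : constantCoeff P = 0) :
    P ∈ polarizedPowerSumIdeal := by
  rw [← Ideal.nsmul_mem_iff_of_charZero (R := R) _ (Fintype.card_ne_zero (α := Equiv.Perm ι)),
    ← symmetrize_of_invariant hP, P.as_sum, map_sum]
  refine sum_mem fun e he => ?_
  have he0 : e ≠ 0 := by
    rintro rfl
    exact mem_support_iff.1 he h0
  rw [← mul_one (coeff e P), ← smul_eq_mul, ← smul_monomial, map_smul]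
  exact Submodule.smul_of_tower_mem _ _ (symmetrize_monomial_mem_polarizedPowerSumIdeal he0)

end PolarizedPowerSumIdeal

section Bidet

variable {ι : Type*} [DecidableEq ι]

lemma Dmon_biexp_monomial (i : ι) (v : ℕ × ℕ) (e : ι ⊕ ι →₀ ℕ) (c : ℚ) :
    Dmon (biexp i v) (monomial e c) = monomial (e - biexp i v)
      (c * ((slotExp e i).1.descFactorial v.1 * (slotExp e i).2.descFactorial v.2 : ℕ)) := by
  rw [biexp, Dmon_add, Module.End.mul_apply, Dmon_single, Dmon_single, pderiv_pow_monomial,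
    pderiv_pow_monomial, tsub_tsub, add_comm (Finsupp.single (Sum.inr i) _)]
  congr 1
  simp only [Finsupp.coe_tsub, Pi.sub_apply, ne_eq, reduceCtorEq, not_false_eq_true,
    Finsupp.single_eq_of_ne, tsub_zero, slotExp, Nat.cast_mul]
  ring

variable [Fintype ι]

def bidet (b : ι → ℕ × ℕ) : MvPolynomial (ι ⊕ ι) ℚ :=
  (Matrix.of fun i j => X (Sum.inl i) ^ (b j).1 * X (Sum.inr i) ^ (b j).2).det

def detExp (b : ι → ℕ × ℕ) (τ : Equiv.Perm ι) : ι ⊕ ι →₀ ℕ :=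
  ∑ j, biexp (τ j) (b j)

lemma slotExp_detExp (b : ι → ℕ × ℕ) (τ : Equiv.Perm ι) :
    slotExp (detExp b τ) = b ∘ τ.symm := by
  funext k
  obtain ⟨t, rfl⟩ := τ.surjective k
  simp [slotExp, detExp, biexp, Finsupp.finsetSum_apply, Finsupp.single_apply, τ.injective.eq_iff]

lemma bidet_eq_sum (b : ι → ℕ × ℕ) :
    bidet b = ∑ τ : Equiv.Perm ι, monomial (detExp b τ) ((Equiv.Perm.sign τ : ℤ) : ℚ) := by
  rw [bidet, Matrix.det_apply]
  refine sum_congr rfl fun τ _ => ?_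
  simp only [Matrix.of_apply, X_pow_mul_X_pow_eq_monomial_biexp]
  rw [← monomial_sum_one, Units.smul_def, ← Int.cast_smul_eq_zsmul ℚ, smul_monomial, smul_eq_mul,
    mul_one, detExp]

lemma detExp_mul_swap_sub_biexp {b : ι → ℕ × ℕ} {j j' : ι} {v : ℕ × ℕ} (hj : b j' + v = b j)
    (τ : Equiv.Perm ι) :
    detExp b (τ * Equiv.swap j j') - biexp (τ j') v = detExp b τ - biexp (τ j) v := by
  refine slotExp_injective (funext fun k => ?_)
  obtain ⟨t, rfl⟩ := τ.surjective k
  simp only [slotExp_tsub, slotExp_detExp, slotExp_biexp, Pi.sub_apply, Function.comp_apply,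
    Equiv.Perm.mul_def, Equiv.symm_trans_apply, Equiv.symm_apply_apply, Equiv.symm_swap,
    Pi.single_apply, τ.injective.eq_iff]
  rcases eq_or_ne t j with rfl | htj
  · rw [Equiv.swap_apply_left, if_pos rfl]
    split_ifs with h
    · rw [h]
    · rw [tsub_zero, ← hj, add_tsub_cancel_right]
  · rcases eq_or_ne t j' with rfl | htj'
    · rw [Equiv.swap_apply_right, if_pos rfl, if_neg htj, tsub_zero, ← hj, add_tsub_cancel_right]
    · rw [Equiv.swap_apply_of_ne_of_ne htj htj', if_neg htj, if_neg htj']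

lemma sum_monomial_detExp_sub_biexp_eq_zero {b : ι → ℕ × ℕ} {j j' : ι} {v : ℕ × ℕ}
    (hv : v ≠ 0) (hj : b j' + v = b j) (c : ℚ) :
    ∑ τ : Equiv.Perm ι,
      monomial (detExp b τ - biexp (τ j) v) ((Equiv.Perm.sign τ : ℤ) * c : ℚ) = 0 := by
  have hne : j ≠ j' := by
    rintro rfl
    exact hv (add_eq_left.1 hj)
  refine sum_involution (fun τ _ => τ * Equiv.swap j j') (fun τ _ => ?_)
    (fun τ _ _ h => hne (Equiv.swap_eq_one_iff.1 (mul_eq_left.1 h))) (fun _ _ => mem_univ _)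
    (fun τ _ => Equiv.mul_swap_mul_self j j' τ)
  rw [Equiv.Perm.mul_apply, Equiv.swap_apply_left, detExp_mul_swap_sub_biexp hj, ← map_add,
    Equiv.Perm.sign_mul, Equiv.Perm.sign_swap hne]
  convert map_zero (monomial (detExp b τ - biexp (τ j) v) : ℚ →ₗ[ℚ] _)
  push_cast
  ring

theorem DP_polarizedPowerSum_bidet {b : ι → ℕ × ℕ} (hb : IsLowerSet (Set.range b))
    {v : ℕ × ℕ} (hv : v ≠ 0) : DP (polarizedPowerSum v) (bidet b) = 0 := by
  have hcol : ∀ j, ∑ τ : Equiv.Perm ι,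
      Dmon (biexp (τ j) v) (monomial (detExp b τ) ((Equiv.Perm.sign τ : ℤ) : ℚ)) = 0 := by
    intro j
    simp only [Dmon_biexp_monomial, slotExp_detExp, Function.comp_apply, Equiv.symm_apply_apply]
    by_cases hvb : v ≤ b j
    · obtain ⟨j', hj'⟩ := hb tsub_le_self ⟨j, rfl⟩
      exact sum_monomial_detExp_sub_biexp_eq_zero hv (hj' ▸ tsub_add_cancel_of_le hvb) _
    · have hzero : (b j).1.descFactorial v.1 * (b j).2.descFactorial v.2 = 0 := by
        rw [Prod.le_def, not_and_or, not_le, not_le] at hvb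
        rcases hvb with h | h <;> simp [Nat.descFactorial_eq_zero_iff_lt.2 h]
      simp only [hzero, Nat.cast_zero, mul_zero, map_zero, sum_const_zero]
  simp only [polarizedPowerSum, DP_sum_left, DP_monomial, one_smul, bidet_eq_sum, map_sum]
  rw [sum_comm]
  refine (sum_congr rfl fun τ _ => (Equiv.sum_comp τ _).symm).trans ?_
  rw [sum_comm]
  exact sum_eq_zero fun j _ => hcol j

end Bidet

def hookBiexp (K L : ℕ) (j : Fin (K + L + 1)) : ℕ × ℕ := (hookP K L j, hookQ K L j)

lemma isLowerSet_range_hookBiexp (K L : ℕ) : IsLowerSet (Set.range (hookBiexp K L)) := by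
  rintro _ ⟨p, q⟩ hw ⟨j, rfl⟩
  have hj := j.isLt
  refine ⟨⟨if p = 0 then q else K + p, ?_⟩, ?_⟩ <;>
    simp only [hookBiexp, hookP, hookQ, Prod.mk_le_mk, Prod.mk.injEq] at hw ⊢ <;>
    split_ifs at hw ⊢ <;> omega

lemma Delta_eq_bidet (K L : ℕ) : Delta K L = bidet (hookBiexp K L) := rfl

/-- Every polynomial which is homogeneous of positive degree and invariant under the
diagonal action of `S_n` (acting simultaneously on the `x` and `y` variables)
annihilates `Δ_μ` as a differential operator. -/
theorem stmt4 (K L : ℕ) (P : MvPolynomial (Fin (K + L + 1) ⊕ Fin (K + L + 1)) ℚ)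
    (m : ℕ) (hm : 0 < m) (hhom : P.IsHomogeneous m)
    (hsym : ∀ σ : Equiv.Perm (Fin (K + L + 1)), rename (Sum.map ⇑σ ⇑σ) P = P) :
    DP P (Delta K L) = 0 := by
  have h0 : constantCoeff P = 0 := hhom.coeff_eq_zero (by simpa using hm.ne)
  have hann : polarizedPowerSumIdeal ≤ diffAnnihilator (Delta K L) := by
    refine Ideal.span_le.2 ?_
    rintro _ ⟨v, hv, rfl⟩
    rw [SetLike.mem_coe, mem_diffAnnihilator, Delta_eq_bidet]
    exact DP_polarizedPowerSum_bidet (isLowerSet_range_hookBiexp K L) hv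
  exact hann (mem_polarizedPowerSumIdeal hsym h0)
end
end

section
/- The set 𝒟 of dessins attached to the hook partition μ = (K+1,1^L) has cardinality n! = (K+L+1)!. -/
open MvPolynomial

noncomputable section

/-- The size (height for a `y`-column, depth for an `x`-column) of the column at
place `i` of a dessin with column types `isY` : the `j`-th `y`-column from the left
has height `K+1-j`, and the `j`-th `x`-column from the left has depth `L+1-j`. -/
def colSize (K L : ℕ) (isY : Fin (K + L) → Bool) (i : Fin (K + L)) : ℕ :=
  if isY i then K - (Finset.univ.filter fun j => j < i ∧ isY j = true).card
  else L - (Finset.univ.filter fun j => j < i ∧ isY j = false).card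

/-- A column is plain ('unie') if it contains only crosses or only blank cells. -/
def Plain (K L : ℕ) (isY : Fin (K + L) → Bool) (cross : Fin (K + L) → ℕ)
    (j : Fin (K + L)) : Prop :=
  cross j = 0 ∨ cross j = colSize K L isY j

/-- A dessin attached to the hook `μ = (K+1,1^L)` : at each of the `K+L` places there
is a `y`-column (`isY i = true`) or an `x`-column (`isY i = false`), with `K` many
`y`-columns; the column at place `i` carries `cross i` crosses, at most its size; and
for each `y`-column, the leftmost plain `x`-column to its right (if any) dictates:
if it has no crosses the `y`-column has at least one cross, and if it is full of
crosses the `y`-column has at least one blank cell. -/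
structure Dessin (K L : ℕ) where
  isY : Fin (K + L) → Bool
  cross : Fin (K + L) → ℕ
  card_isY : (Finset.univ.filter fun i => isY i = true).card = K
  cross_le : ∀ i, cross i ≤ colSize K L isY i
  rule : ∀ i j : Fin (K + L), isY i = true → isY j = false → i < j →
    Plain K L isY cross j →
    (∀ j', i < j' → j' < j → isY j' = false → ¬ Plain K L isY cross j') →
    ((cross j = 0 → 1 ≤ cross i) ∧
     (cross j = colSize K L isY j → cross i < colSize K L isY i))

/-!
Deleting the leftmost column of a dessin leaves a dessin with one column fewer, because the
rule only looks to the right of a `y`-column. Conversely, a leftmost `x`-column of depth `L`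
may carry any of its `L + 1` possible numbers of crosses, while a leftmost `y`-column of
height `K` may carry any of its `K + 1` numbers except the one forbidden by the first plain
`x`-column; such a column exists as soon as `L > 0`, since the last `x`-column has depth `1`.
So the number `d(K, L)` of dessins satisfies `d(K, L) = (L + 1) d(K, L - 1) + K d(K - 1, L)`,
and `d(K, L) = (K + L + 1)!` follows by induction on `K + L`.
-/

theorem Nat.card_subtype_prod_of_card_fiber {α β : Type*} {p : α → Prop} {q : α → β → Prop}
    {k : ℕ} (hk : k ≠ 0) (h : ∀ a, p a → Nat.card {b // q a b} = k) :
    Nat.card {x : α × β // p x.1 ∧ q x.1 x.2} = Nat.card {a // p a} * k :=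
  calc Nat.card {x : α × β // p x.1 ∧ q x.1 x.2}
      = Nat.card (Σ a : {a // p a}, {b // q a b}) :=
        Nat.card_congr ⟨fun x => ⟨⟨x.1.1, x.2.1⟩, x.1.2, x.2.2⟩,
          fun y => ⟨(y.1, y.2), y.1.2, y.2.2⟩, fun _ => rfl, fun _ => rfl⟩
    _ = Nat.card ({a // p a} × Fin k) :=
        Nat.card_congr <| Equiv.sigmaEquivProdOfEquiv fun a =>
          (Nat.equivFinOfCardPos (by rwa [h a a.2])).trans (finCongr (h a a.2))
    _ = Nat.card {a // p a} * k := by simp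

def Fin.subtypeConsEquiv {n : ℕ} {α β : Type*}
    (P : (Fin (n + 1) → α) → (Fin (n + 1) → β) → Prop) (a : α) :
    {d : {p : (Fin (n + 1) → α) × (Fin (n + 1) → β) // P p.1 p.2} // d.1.1 0 = a} ≃
      {q : ((Fin n → α) × (Fin n → β)) × β // P (Fin.cons a q.1.1) (Fin.cons q.2 q.1.2)} where
  toFun := fun ⟨⟨(f, g), h⟩, hf⟩ => ⟨((Fin.tail f, Fin.tail g), g 0), by
    subst hf
    simpa only [Fin.cons_self_tail] using h⟩
  invFun := fun ⟨((f, g), c), h⟩ => ⟨⟨(Fin.cons a f, Fin.cons c g), h⟩, rfl⟩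
  left_inv := fun ⟨⟨(f, g), h⟩, hf⟩ => by
    subst hf
    simp
  right_inv := fun ⟨((f, g), c), h⟩ => by simp

namespace Dessin

open Finset
open scoped Nat

variable {n : ℕ}

def colSize' (K L : ℕ) (isY : Fin n → Bool) (i : Fin n) : ℕ :=
  if isY i then K - #{j | j < i ∧ isY j = true} else L - #{j | j < i ∧ isY j = false}

def IsPlain (size cross : Fin n → ℕ) (j : Fin n) : Prop :=
  cross j = 0 ∨ cross j = size j

/-- What the rule demands of a `y`-column of height `h` with `c` crosses placed in front of
the columns `isY`. -/
def HeadRule (isY : Fin n → Bool) (size cross : Fin n → ℕ) (h c : ℕ) : Prop :=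
  ∀ j, isY j = false → IsPlain size cross j →
    (∀ j' < j, isY j' = false → ¬ IsPlain size cross j') →
    (cross j = 0 → 1 ≤ c) ∧ (cross j = size j → c < h)

def Rule (isY : Fin n → Bool) (size cross : Fin n → ℕ) : Prop :=
  ∀ i j, isY i = true → isY j = false → i < j → IsPlain size cross j →
    (∀ j', i < j' → j' < j → isY j' = false → ¬ IsPlain size cross j') →
    (cross j = 0 → 1 ≤ cross i) ∧ (cross j = size j → cross i < size i)

@[simp]
lemma isPlain_cons_succ (size cross : Fin n → ℕ) (h c : ℕ) (j : Fin n) :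
    IsPlain (Fin.cons h size) (Fin.cons c cross) j.succ ↔ IsPlain size cross j := by
  simp [IsPlain]

lemma rule_cons_iff (isY : Fin n → Bool) (size cross : Fin n → ℕ) (b : Bool) (h c : ℕ) :
    Rule (Fin.cons b isY) (Fin.cons h size) (Fin.cons c cross)
      ↔ (b = true → HeadRule isY size cross h c) ∧ Rule isY size cross := by
  simp [Rule, HeadRule, Fin.forall_fin_succ, forall_comm (α := b = true)]

lemma colSize'_cons_true (K L : ℕ) (isY : Fin n → Bool) :
    colSize' (K + 1) L (Fin.cons true isY) = Fin.cons (K + 1) (colSize' K L isY) := by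
  ext i
  cases i using Fin.cases with
  | zero => simp [colSize']
  | succ i =>
    simp only [colSize', Fin.cons_succ, Fin.card_filter_univ_succ', Fin.succ_pos,
      Fin.succ_lt_succ_iff, Fin.cons_zero]
    split <;> simp [add_comm 1, Nat.add_sub_add_right]

lemma colSize'_cons_false (K L : ℕ) (isY : Fin n → Bool) :
    colSize' K (L + 1) (Fin.cons false isY) = Fin.cons (L + 1) (colSize' K L isY) := by
  ext i
  cases i using Fin.cases with
  | zero => simp [colSize']
  | succ i =>
    simp only [colSize', Fin.cons_succ, Fin.card_filter_univ_succ', Fin.succ_pos,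
      Fin.succ_lt_succ_iff, Fin.cons_zero]
    split <;> simp [add_comm 1, Nat.add_sub_add_right]

/-- `Dessin K L` with the columns at the places `Fin n`; recording the number of `x`-columns
as well forces `n = K + L`. -/
structure IsDessin (K L : ℕ) (isY : Fin n → Bool) (cross : Fin n → ℕ) : Prop where
  card_y : #{i | isY i = true} = K
  card_x : #{i | isY i = false} = L
  cross_le : ∀ i, cross i ≤ colSize' K L isY i
  rule : Rule isY (colSize' K L isY) cross

lemma isDessin_iff {K L : ℕ} {isY : Fin n → Bool} {cross : Fin n → ℕ} :
    IsDessin K L isY cross ↔ #{i | isY i = true} = K ∧ #{i | isY i = false} = L ∧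
      (∀ i, cross i ≤ colSize' K L isY i) ∧ Rule isY (colSize' K L isY) cross :=
  ⟨fun ⟨h₁, h₂, h₃, h₄⟩ => ⟨h₁, h₂, h₃, h₄⟩, fun ⟨h₁, h₂, h₃, h₄⟩ => ⟨h₁, h₂, h₃, h₄⟩⟩

variable {K L c : ℕ} {isY : Fin n → Bool} {cross : Fin n → ℕ}

lemma isDessin_cons_true_iff :
    IsDessin (K + 1) L (Fin.cons true isY) (Fin.cons c cross) ↔
      IsDessin K L isY cross ∧ c ≤ K + 1 ∧ HeadRule isY (colSize' K L isY) cross (K + 1) c := by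
  simp only [isDessin_iff, colSize'_cons_true, rule_cons_iff, Fin.card_filter_univ_succ',
    Fin.forall_fin_succ, Fin.cons_zero, Fin.cons_succ, ↓reduceIte, Bool.true_eq_false, zero_add,
    add_comm 1, Nat.add_right_cancel_iff, forall_const]
  tauto

lemma isDessin_cons_false_iff :
    IsDessin K (L + 1) (Fin.cons false isY) (Fin.cons c cross) ↔
      IsDessin K L isY cross ∧ c ≤ L + 1 := by
  simp only [isDessin_iff, colSize'_cons_false, rule_cons_iff, Fin.card_filter_univ_succ',
    Fin.forall_fin_succ, Fin.cons_zero, Fin.cons_succ, ↓reduceIte, Bool.false_eq_true, zero_add,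
    add_comm 1, Nat.add_right_cancel_iff, IsEmpty.forall_iff, true_and]
  tauto

lemma colSize'_of_false {j : Fin n} (hj : isY j = false) :
    colSize' K L isY j = L - #{j' | j' < j ∧ isY j' = false} := by
  simp [colSize', hj]

lemma IsDessin.colSize'_pos (hd : IsDessin K L isY cross) {j : Fin n} (hj : isY j = false) :
    0 < colSize' K L isY j := by
  have hlt : #{j' | j' < j ∧ isY j' = false} < L := by
    rw [← hd.card_x]
    refine card_lt_card ⟨fun j' => by simp +contextual, fun hsub => ?_⟩
    simpa using hsub (mem_filter.mpr ⟨mem_univ j, hj⟩)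
  rw [colSize'_of_false hj]
  omega

lemma IsDessin.exists_isPlain (hd : IsDessin K L isY cross) (hL : L ≠ 0) :
    ∃ j, isY j = false ∧ IsPlain (colSize' K L isY) cross j := by
  have hne : ({j | isY j = false} : Finset (Fin n)).Nonempty := by
    rw [← card_ne_zero, hd.card_x]
    exact hL
  set last := max' _ hne
  have hlast : isY last = false := by simpa using max'_mem _ hne
  have hbefore : #{j | j < last ∧ isY j = false} = L - 1 := by
    rw [← hd.card_x, ← card_erase_of_mem (max'_mem _ hne)]
    congr 1
    ext j
    simp only [mem_filter, mem_univ, true_and, mem_erase]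
    exact ⟨fun h => ⟨h.1.ne, h.2⟩,
      fun h => ⟨lt_of_le_of_ne (le_max' _ _ (by simpa using h.2)) h.1, h.2⟩⟩
  -- the last `x`-column has depth `1`
  refine ⟨last, hlast, ?_⟩
  have hle := hd.cross_le last
  simp only [IsPlain, colSize'_of_false hlast, hbefore] at hle ⊢
  omega

lemma IsDessin.ne_zero_of_isY_true (hd : IsDessin K L isY cross) {j : Fin n} (hj : isY j = true) :
    K ≠ 0 := by
  rw [← hd.card_y]
  exact card_ne_zero_of_mem (mem_filter.mpr ⟨mem_univ j, hj⟩)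

lemma IsDessin.ne_zero_of_isY_false (hd : IsDessin K L isY cross) {j : Fin n} (hj : isY j = false) :
    L ≠ 0 := by
  rw [← hd.card_x]
  exact card_ne_zero_of_mem (mem_filter.mpr ⟨mem_univ j, hj⟩)

lemma headRule_iff {size : Fin n → ℕ} {h : ℕ} {j₀ : Fin n} (hx : isY j₀ = false)
    (hp : IsPlain size cross j₀) (hmin : ∀ j < j₀, isY j = false → ¬ IsPlain size cross j) :
    HeadRule isY size cross h c ↔ (cross j₀ = 0 → 1 ≤ c) ∧ (cross j₀ = size j₀ → c < h) := by
  refine ⟨fun hr => hr j₀ hx hp hmin, fun hc j hjx hjp hjmin => ?_⟩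
  obtain rfl : j = j₀ := by
    rcases lt_trichotomy j j₀ with hlt | heq | hgt
    · exact absurd hjp (hmin j hlt hjx)
    · exact heq
    · exact absurd hp (hjmin j₀ hgt hx)
  exact hc

lemma IsDessin.card_headRule (hd : IsDessin K L isY cross) :
    Nat.card {c // c ≤ K + 1 ∧ HeadRule isY (colSize' K L isY) cross (K + 1) c}
      = if L = 0 then K + 2 else K + 1 := by
  split_ifs with hL
  · have hvac : ∀ c, HeadRule isY (colSize' K L isY) cross (K + 1) c :=
      fun _ _ hj => absurd hL (hd.ne_zero_of_isY_false hj)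
    trans Nat.card (Set.Iic (K + 1))
    · exact Nat.card_congr (Equiv.subtypeEquivRight fun c => and_iff_left (hvac c))
    · simp
  · obtain ⟨j₀, ⟨hx, hp⟩, hmin⟩ := wellFounded_lt.has_min
      {j | isY j = false ∧ IsPlain (colSize' K L isY) cross j} (hd.exists_isPlain hL)
    have hpos := hd.colSize'_pos hx
    have hrule := fun c => headRule_iff (h := K + 1) (c := c) hx hp
      fun j hj hjx hjp => hmin j ⟨hjx, hjp⟩ hj
    rcases hp with h0 | hfull
    · trans Nat.card (Set.Icc 1 (K + 1))
      · exact Nat.card_congr (Equiv.subtypeEquivRight fun c => by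
          simp only [hrule, Set.mem_Icc]; omega)
      · simp
    · trans Nat.card (Set.Iio (K + 1))
      · exact Nat.card_congr (Equiv.subtypeEquivRight fun c => by
          simp only [hrule, Set.mem_Iio]; omega)
      · simp

abbrev Dessins (K L n : ℕ) : Type :=
  {p : (Fin n → Bool) × (Fin n → ℕ) // IsDessin K L p.1 p.2}

instance (K L n : ℕ) : Finite (Dessins K L n) := by
  have hsub : {p : (Fin n → Bool) × (Fin n → ℕ) | IsDessin K L p.1 p.2}
      ⊆ Set.univ ×ˢ Set.univ.pi fun _ => Set.Iic (K + L) := fun p hp =>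
    ⟨trivial, fun i _ => (hp.cross_le i).trans (by unfold colSize'; split <;> omega)⟩
  exact ((Set.finite_univ.prod (Set.Finite.pi fun _ => Set.finite_Iic _)).subset hsub).to_subtype

lemma card_dessins_succ (K L n : ℕ) :
    Nat.card (Dessins K L (n + 1)) = Nat.card {d : Dessins K L (n + 1) // d.1.1 0 = true}
      + Nat.card {d : Dessins K L (n + 1) // d.1.1 0 = false} := by
  rw [← Nat.card_congr (Equiv.sumCompl fun d : Dessins K L (n + 1) => d.1.1 0 = true),
    Nat.card_sum]
  simp only [Bool.not_eq_true]

lemma card_head_y (K L n : ℕ) :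
    Nat.card {d : Dessins (K + 1) L (n + 1) // d.1.1 0 = true}
      = Nat.card (Dessins K L n) * if L = 0 then K + 2 else K + 1 := by
  rw [Nat.card_congr ((Fin.subtypeConsEquiv _ true).trans
    (Equiv.subtypeEquivRight fun _ => isDessin_cons_true_iff))]
  refine Nat.card_subtype_prod_of_card_fiber ?_ fun _ => IsDessin.card_headRule
  split_ifs <;> omega

lemma card_head_x (K L n : ℕ) :
    Nat.card {d : Dessins K (L + 1) (n + 1) // d.1.1 0 = false}
      = Nat.card (Dessins K L n) * (L + 2) := by
  rw [Nat.card_congr ((Fin.subtypeConsEquiv _ false).trans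
    ((Equiv.subtypeEquivRight fun _ => isDessin_cons_false_iff).trans
      (Equiv.subtypeProdEquivProd (p := fun t : (Fin n → Bool) × (Fin n → ℕ) =>
        IsDessin K L t.1 t.2) (q := (· ≤ L + 1))))), Nat.card_prod]
  congr 1
  simp [← Finset.mem_Iic]

lemma card_head_y_zero (L n : ℕ) :
    Nat.card {d : Dessins 0 L (n + 1) // d.1.1 0 = true} = 0 :=
  Nat.card_eq_zero.mpr <| .inl ⟨fun d => d.1.2.ne_zero_of_isY_true d.2 rfl⟩

lemma card_head_x_zero (K n : ℕ) :
    Nat.card {d : Dessins K 0 (n + 1) // d.1.1 0 = false} = 0 :=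
  Nat.card_eq_zero.mpr <| .inl ⟨fun d => d.1.2.ne_zero_of_isY_false d.2 rfl⟩

theorem card_dessins (hKL : K + L = n) : Nat.card (Dessins K L n) = (n + 1)! := by
  induction n generalizing K L with
  | zero =>
    obtain ⟨rfl, rfl⟩ : K = 0 ∧ L = 0 := by omega
    rw [zero_add, Nat.factorial_one, Nat.card_eq_one_iff_unique]
    exact ⟨inferInstance, ⟨⟨(Fin.elim0, Fin.elim0), by simp [isDessin_iff, Rule]⟩⟩⟩
  | succ n ih =>
    rw [card_dessins_succ, Nat.factorial_succ (n + 1)]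
    rcases K with _ | K <;> rcases L with _ | L
    · omega
    · rw [card_head_y_zero, card_head_x, ih (K := 0) (L := L) (by omega)]
      obtain rfl : L = n := by omega
      ring
    · rw [card_head_y, card_head_x_zero, ih (K := K) (L := 0) (by omega), if_pos rfl]
      obtain rfl : K = n := by omega
      ring
    · rw [card_head_y, card_head_x, ih (K := K) (L := L + 1) (by omega),
        ih (K := K + 1) (L := L) (by omega),
        if_neg L.succ_ne_zero]
      obtain rfl : n = K + L + 1 := by omega
      ring

lemma card_isY_false_of_card_isY_true {K L : ℕ} {isY : Fin (K + L) → Bool}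
    (h : #{i | isY i = true} = K) : #{i | isY i = false} = L := by
  have := card_filter_add_card_filter_not (s := univ) fun i => isY i = true
  simp only [Bool.not_eq_true, card_fin] at this
  omega

def equivDessins (K L : ℕ) : Dessin K L ≃ Dessins K L (K + L) where
  toFun d := ⟨(d.isY, d.cross),
    d.card_isY, card_isY_false_of_card_isY_true d.card_isY, d.cross_le, d.rule⟩
  invFun d := ⟨d.1.1, d.1.2, d.2.card_y, d.2.cross_le, d.2.rule⟩
  left_inv _ := rfl
  right_inv _ := rfl

end Dessin

/-- The set of dessins attached to the hook `μ = (K+1,1^L)` has cardinality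
`n! = (K+L+1)!`. -/
theorem stmt10 (K L : ℕ) : Nat.card (Dessin K L) = Nat.factorial (K + L + 1) := by
  rw [Nat.card_congr (Dessin.equivDessins K L), Dessin.card_dessins rfl]
end
end
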